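/- arXiv:2403.00373 — 3 statements merged into one kernel-verified Lean document; each statement's English description precedes it below -/
import Mathlib

section
/- Let F be an algebraically closed field and let κ be a finitary functor (i.e., preserving filtered colimits) from the category of commutative F-algebras to the category of sets. Then for every nonzero commutative F-algebra E (i.e., 0 ≠ 1 in E), the map κ(F) → κ(E) induced by the structure homomorphism F → E is injective. -/
/-!
A commutative `F`-algebra `E` is the filtered union of its finitely generated subalgebras, so
since `κ` preserves filtered colimits, two elements of `κ(F)` identified in `κ(E)` are already
identified in `κ(A)` for some finitely generated subalgebra `A`. As `E` is nonzero so is `A`, and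
by the Nullstellensatz `A` has an `F`-point `A → F`; it splits `F → A`, so `κ(F) → κ(A)` is
injective.
-/

open CategoryTheory Limits

/-- The category of commutative `F`-algebras, realized as commutative rings under `F`. -/
abbrev CommAlgUnderCat (F : Type) [CommRing F] : Type 1 := Under (CommRingCat.of F)

/-- The object of `CommAlgCat F` attached to a commutative `F`-algebra. -/
def ofAlg (F : Type) [CommRing F] (A : Type) [CommRing A] [Algebra F A] : CommAlgUnderCat F :=
  Under.mk (CommRingCat.ofHom (algebraMap F A))

/-- The morphism of `CommAlgCat F` attached to an `F`-algebra homomorphism. -/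
def ofAlgHom (F : Type) [CommRing F] {A B : Type} [CommRing A] [CommRing B]
    [Algebra F A] [Algebra F B] (f : A →ₐ[F] B) : ofAlg F A ⟶ ofAlg F B :=
  Under.homMk (CommRingCat.ofHom f.toRingHom)
    (by ext x; exact (f.commutes x))

section ofAlgHom

variable (F : Type) [CommRing F]

lemma ofAlgHom_comp {A B C : Type} [CommRing A] [CommRing B] [CommRing C]
    [Algebra F A] [Algebra F B] [Algebra F C] (f : A →ₐ[F] B) (g : B →ₐ[F] C) :
    ofAlgHom F (g.comp f) = ofAlgHom F f ≫ ofAlgHom F g :=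
  rfl

lemma ofAlgHom_id (A : Type) [CommRing A] [Algebra F A] :
    ofAlgHom F (AlgHom.id F A) = 𝟙 (ofAlg F A) :=
  rfl

lemma ofAlgHom_ofId_comp {A B : Type} [CommRing A] [CommRing B] [Algebra F A] [Algebra F B]
    (f : A →ₐ[F] B) :
    ofAlgHom F (Algebra.ofId F A) ≫ ofAlgHom F f = ofAlgHom F (Algebra.ofId F B) := by
  rw [← ofAlgHom_comp, Subsingleton.elim (f.comp _) (Algebra.ofId F B)]

lemma map_ofAlgHom_map_ofId {A B : Type} [CommRing A] [CommRing B] [Algebra F A] [Algebra F B]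
    (κ : CommAlgUnderCat F ⥤ Type) (f : A →ₐ[F] B) (a : κ.obj (ofAlg F F)) :
    κ.map (ofAlgHom F f) (κ.map (ofAlgHom F (Algebra.ofId F A)) a) =
      κ.map (ofAlgHom F (Algebra.ofId F B)) a := by
  rw [← Functor.map_comp_apply, ofAlgHom_ofId_comp]

theorem injective_map_ofAlgHom_ofId {A : Type} [CommRing A] [Algebra F A] (φ : A →ₐ[F] F)
    (κ : CommAlgUnderCat F ⥤ Type) :
    Function.Injective (κ.map (ofAlgHom F (Algebra.ofId F A))) := by
  refine Function.LeftInverse.injective (g := κ.map (ofAlgHom F φ)) fun a => ?_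
  rw [map_ofAlgHom_map_ofId, Subsingleton.elim (Algebra.ofId F F) (AlgHom.id F F), ofAlgHom_id,
    Functor.map_id_apply]

end ofAlgHom

theorem Algebra.FiniteType.nonempty_algHom_of_isAlgClosed (F : Type) [Field F] [IsAlgClosed F]
    (A : Type) [CommRing A] [Nontrivial A] [Algebra F A] [Algebra.FiniteType F A] :
    Nonempty (A →ₐ[F] F) := by
  obtain ⟨m, hm⟩ := Ideal.exists_maximal A
  let := Ideal.Quotient.field m
  have : Module.Finite F (A ⧸ m) := finite_of_finite_type_of_isJacobsonRing F (A ⧸ m)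
  exact ⟨(IsAlgClosed.lift : A ⧸ m →ₐ[F] F).comp (Ideal.Quotient.mkₐ F m)⟩

section FGSubalgebra

variable (F : Type) [CommRing F] (E : Type) [CommRing E] [Algebra F E]

abbrev FGSubalgebra : Type := {A : Subalgebra F E // A.FG}

noncomputable instance : SemilatticeSup (FGSubalgebra F E) :=
  Subtype.semilatticeSup fun _ _ => Subalgebra.FG.sup

instance : Inhabited (FGSubalgebra F E) := ⟨⟨⊥, Subalgebra.fg_bot⟩⟩

noncomputable def fgSubalgebraDiagram : FGSubalgebra F E ⥤ CommAlgUnderCat F where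
  obj A := ofAlg F A.1
  map f := ofAlgHom F (Subalgebra.inclusion (leOfHom f))
  map_id A := by rw [Subalgebra.inclusion_self, ofAlgHom_id]
  map_comp _ _ := by rw [← ofAlgHom_comp]; rfl

noncomputable def fgSubalgebraCocone : Cocone (fgSubalgebraDiagram F E) where
  pt := ofAlg F E
  ι.app A := ofAlgHom F A.1.val
  ι.naturality _ _ _ := rfl

attribute [local instance] IsFiltered.isConnected in
noncomputable def isColimitFGSubalgebraCocone : IsColimit (fgSubalgebraCocone F E) := by
  have : ReflectsColimitsOfShape (FGSubalgebra F E) (forget CommRingCat) :=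
    reflectsColimitsOfShape_of_reflectsIsomorphisms
  refine isColimitOfReflects (Under.forget _ ⋙ forget CommRingCat)
    (Types.FilteredColimit.isColimitOf _ _ (fun (x : E) => ?_) fun i j _ _ h => ?_)
  · exact ⟨⟨Algebra.adjoin F {x}, ⟨{x}, by simp⟩⟩, ⟨x, Algebra.self_mem_adjoin_singleton F x⟩, rfl⟩
  · exact ⟨i ⊔ j, homOfLE le_sup_left, homOfLE le_sup_right, Subtype.ext h⟩

end FGSubalgebra

theorem exists_fgSubalgebra_map_ofId_eq {F E : Type} [CommRing F] [CommRing E] [Algebra F E]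
    (κ : CommAlgUnderCat F ⥤ Type) [PreservesFilteredColimits κ] {a b : κ.obj (ofAlg F F)}
    (hab : κ.map (ofAlgHom F (Algebra.ofId F E)) a = κ.map (ofAlgHom F (Algebra.ofId F E)) b) :
    ∃ A : FGSubalgebra F E,
      κ.map (ofAlgHom F (Algebra.ofId F A.1)) a = κ.map (ofAlgHom F (Algebra.ofId F A.1)) b := by
  let η (A : FGSubalgebra F E) := κ.map (ofAlgHom F (Algebra.ofId F A.1))
  have hι : (κ.mapCocone (fgSubalgebraCocone F E)).ι.app default (η default a) =
      (κ.mapCocone (fgSubalgebraCocone F E)).ι.app default (η default b) := by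
    change κ.map (ofAlgHom F (Subalgebra.val _)) (η default a) =
      κ.map (ofAlgHom F (Subalgebra.val _)) (η default b)
    rwa [map_ofAlgHom_map_ofId, map_ofAlgHom_map_ofId]
  obtain ⟨A, f, hf⟩ := (Types.FilteredColimit.isColimit_eq_iff'
    (isColimitOfPreserves κ (isColimitFGSubalgebraCocone F E)) _ _).mp hι
  change κ.map (ofAlgHom F (Subalgebra.inclusion (leOfHom f))) (η default a) =
      κ.map (ofAlgHom F (Subalgebra.inclusion (leOfHom f))) (η default b) at hf
  rw [map_ofAlgHom_map_ofId, map_ofAlgHom_map_ofId] at hf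
  exact ⟨A, hf⟩

/-- For a finitary set-valued functor `κ` on commutative algebras over an algebraically
closed field `F`, the map `κ(F) → κ(E)` induced by the structure morphism is injective
for every nonzero commutative `F`-algebra `E`. -/
theorem stmt2 (F : Type) [Field F] [IsAlgClosed F] (κ : CommAlgUnderCat F ⥤ Type)
    [PreservesFilteredColimits κ]
    (E : Type) [CommRing E] [Algebra F E] [Nontrivial E] :
    Function.Injective (κ.map (ofAlgHom F (Algebra.ofId F E))) := by
  intro a b hab
  obtain ⟨⟨A, hA⟩, hAab⟩ := exists_fgSubalgebra_map_ofId_eq κ hab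
  have : Algebra.FiniteType F A := (Subalgebra.fg_iff_finiteType A).mp hA
  obtain ⟨φ⟩ := Algebra.FiniteType.nonempty_algHom_of_isAlgClosed F A
  exact injective_map_ofAlgHom_ofId F φ κ hAab
end

section
/- Let p be a prime, F an algebraically closed field of characteristic p, S a finite set, and π : S → S a bijection. Define the group endomorphism Φ of the abelian group of functions S → Fˣ (with pointwise multiplication) by Φ(f)(s) = f(π(s))^p, and let δ be the endomorphism f ↦ f·Φ(f)⁻¹. Then both the kernel and the cokernel of δ are torsion abelian groups; equivalently, δ becomes bijective after tensoring with ℚ. -/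
/-!
If `Φ^[m]` is the power map `x ↦ x ^ N`, then a fixed point `f` of `Φ` satisfies `f = f ^ N`,
and composing `δ = id / Φ` with the norm `h ↦ ∏_{i<m} Φ^[i] h` telescopes to `g ↦ g / g ^ N`.
Hence kernel and cokernel of `δ` are killed by `N - 1`. For the twisted Frobenius
`f ↦ (f ∘ π) ^ p` one takes `m = orderOf π` and `N = p ^ m`.
-/

open Finset

section IterateEqPow

variable {G : Type*} [CommGroup G] (Φ : G →* G)

theorem prod_range_iterate_div_map (g : G) (m : ℕ) :
    (∏ i ∈ range m, Φ^[i] g) / Φ (∏ i ∈ range m, Φ^[i] g) = g / Φ^[m] g := by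
  induction m with
  | zero => simp
  | succ m ih =>
    rw [prod_range_succ, map_mul, mul_div_mul_comm, ih, ← Function.iterate_succ_apply' Φ]
    exact div_mul_div_cancel g (Φ^[m] g) (Φ^[m + 1] g)

variable {δ : G →* G} {m N : ℕ}

theorem pow_sub_one_eq_one_of_mem_ker (hδ : ∀ f, δ f = f / Φ f)
    (hΦ : ∀ g, Φ^[m] g = g ^ N) {f : G} (hf : f ∈ δ.ker) : f ^ (N - 1) = 1 := by
  have hfix : Φ f = f := (div_eq_one.mp (hδ f ▸ hf)).symm
  have hpow : f ^ N = f := (hΦ f).symm.trans (Function.iterate_fixed hfix m)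
  rcases N.eq_zero_or_pos with rfl | hN
  · simp
  · rw [pow_sub f hN, hpow, pow_one, mul_inv_cancel]

theorem pow_sub_one_mem_range (hδ : ∀ f, δ f = f / Φ f)
    (hΦ : ∀ g, Φ^[m] g = g ^ N) (hN : 1 ≤ N) (g : G) : g ^ (N - 1) ∈ δ.range := by
  refine ⟨(∏ i ∈ range m, Φ^[i] g)⁻¹, ?_⟩
  rw [hδ, map_inv, ← inv_div', prod_range_iterate_div_map, hΦ, inv_div, pow_sub g hN, pow_one,
    div_eq_mul_inv]

end IterateEqPow

section TwistedPow

variable {S M : Type*} [CommMonoid M]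

def twistedPow (p : ℕ) (π : Equiv.Perm S) : (S → M) →* (S → M) where
  toFun f s := f (π s) ^ p
  map_one' := funext fun _ => one_pow p
  map_mul' f g := funext fun s => mul_pow (f (π s)) (g (π s)) p

@[simp]
theorem twistedPow_apply (p : ℕ) (π : Equiv.Perm S) (f : S → M) (s : S) :
    twistedPow p π f s = f (π s) ^ p :=
  rfl

theorem twistedPow_iterate_apply (p : ℕ) (π : Equiv.Perm S) (k : ℕ) (f : S → M) (s : S) :
    (twistedPow p π)^[k] f s = f ((π ^ k) s) ^ p ^ k := by
  induction k generalizing s with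
  | zero => simp
  | succ k ih =>
    rw [Function.iterate_succ_apply', twistedPow_apply, ih,
      ← pow_mul, pow_succ, pow_succ, Equiv.Perm.mul_apply]

theorem twistedPow_iterate_orderOf [Finite S] (p : ℕ) (π : Equiv.Perm S) (f : S → M) :
    (twistedPow p π)^[orderOf π] f = f ^ p ^ orderOf π := by
  funext s
  rw [twistedPow_iterate_apply, pow_orderOf_eq_one, Equiv.Perm.one_apply, Pi.pow_apply]

end TwistedPow

theorem stmt6_general (p : ℕ) [Fact p.Prime] (F : Type) [Field F]
    (S : Type) [Fintype S] (π : Equiv.Perm S)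
    (δ : (S → Fˣ) →* (S → Fˣ))
    (hδ : ∀ (f : S → Fˣ) (s : S), δ f s = f s * (f (π s) ^ p)⁻¹) :
    (∀ f ∈ δ.ker, ∃ n : ℕ, 0 < n ∧ f ^ n = 1) ∧
    (∀ g : S → Fˣ, ∃ n : ℕ, 0 < n ∧ g ^ n ∈ δ.range) := by
  have hδ' : ∀ f, δ f = f / twistedPow p π f := fun f =>
    funext fun s => (hδ f s).trans (div_eq_mul_inv _ _).symm
  have hΦ := twistedPow_iterate_orderOf (M := Fˣ) p π
  have hN : 1 < p ^ orderOf π :=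
    Nat.one_lt_pow (orderOf_pos π).ne' (Fact.out : p.Prime).one_lt
  exact ⟨fun f hf => ⟨_, Nat.sub_pos_of_lt hN, pow_sub_one_eq_one_of_mem_ker _ hδ' hΦ hf⟩,
    fun g => ⟨_, Nat.sub_pos_of_lt hN, pow_sub_one_mem_range _ hδ' hΦ hN.le g⟩⟩

/-- For an algebraically closed field `F` of characteristic `p`, a finite set `S` with a
permutation `π`, and the twisted Frobenius endomorphism `Φ f = fun s => f (π s) ^ p` of the
group of functions `S → Fˣ`, the kernel and the cokernel of `δ : f ↦ f · (Φ f)⁻¹` are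
torsion abelian groups (equivalently, `δ` becomes bijective after tensoring with `ℚ`). -/
theorem stmt6 (p : ℕ) [Fact p.Prime] (F : Type) [Field F] [IsAlgClosed F] [CharP F p]
    (S : Type) [Fintype S] (π : Equiv.Perm S)
    (δ : (S → Fˣ) →* (S → Fˣ))
    (hδ : ∀ (f : S → Fˣ) (s : S), δ f s = f s * (f (π s) ^ p)⁻¹) :
    (∀ f ∈ δ.ker, ∃ n : ℕ, 0 < n ∧ f ^ n = 1) ∧
    (∀ g : S → Fˣ, ∃ n : ℕ, 0 < n ∧ g ^ n ∈ δ.range) :=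
  stmt6_general p F S π δ hδ
end

section
/- Let p be a prime and let R be a commutative ring of characteristic p. Let M be an invertible R-module, i.e., there exist an R-module N and an R-module isomorphism M ⊗_R N ≅ R (equivalently, M is finitely generated projective of constant rank 1). Let φ : R → R denote the Frobenius ring endomorphism x ↦ x^p. Then the base change of M along φ (the R-module R ⊗_{φ,R} M, with R acting through the left tensor factor) is isomorphic as an R-module to the p-fold tensor power M ⊗_R M ⊗_R ⋯ ⊗_R M (p factors). -/
open scoped TensorProduct

/-- For a commutative ring `R` of characteristic `p` and an invertible `R`-module `M`
(witnessed by `N` and the isomorphism `M ⊗ N ≅ R`), the base change of `M` along the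
Frobenius `φ : x ↦ x^p`, i.e. `R ⊗[φ,R] M` where the left factor is the `R`-module `R`
via `φ` and `R` acts through the left tensor factor, is isomorphic to the `p`-fold tensor
power of `M`.  The isomorphism is an additive equivalence `e` which intertwines left
multiplication on the left tensor factor with the `R`-action on `⨂[R]^p M`. -/
theorem stmt11 (p : ℕ) [Fact p.Prime] (R : Type) [CommRing R] [CharP R p]
    (M : Type) [AddCommGroup M] [Module R M]
    (N : Type) [AddCommGroup N] [Module R N]
    (inv : TensorProduct R M N ≃ₗ[R] R) :
    letI : Module R R := Module.compHom R (frobenius R p)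
    ∃ e : TensorProduct R R M ≃+ PiTensorProduct R (fun _ : Fin p => M),
      ∀ (r x : R) (m : M), e ((r * x) ⊗ₜ[R] m) = r • e (x ⊗ₜ[R] m) := by
  classical
  have hp : p.Prime := Fact.out
  -- the pairing a m n = inv (m ⊗ n)
  let a : M →ₗ[R] N →ₗ[R] R := (TensorProduct.mk R M N).compr₂ inv.toLinearMap
  have ha : ∀ m n, a m n = inv (m ⊗ₜ[R] n) := fun _ _ => rfl
  obtain ⟨S, hS⟩ := TensorProduct.exists_finset (inv.symm 1)
  have sum1 : ∑ q ∈ S, a q.1 q.2 = 1 := by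
    have : inv (inv.symm 1) = (1 : R) := inv.apply_symm_apply 1
    rw [hS, map_sum] at this
    simpa [ha] using this
  -- key rewriting lemma
  have K1 : ∀ (m : M) (n : N), m ⊗ₜ[R] n = a m n • inv.symm 1 := by
    intro m n
    have h1 : m ⊗ₜ[R] n = inv.symm (inv (m ⊗ₜ[R] n)) := (inv.symm_apply_apply _).symm
    rw [h1, ← ha]
    have : a m n = a m n • (1 : R) := by rw [smul_eq_mul, mul_one]
    rw [this, map_smul, smul_eq_mul, mul_one]
  -- the "would-be identity" map
  set α : M → M := fun m => ∑ q ∈ S, a m q.2 • q.1 with hαdef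
  have I1 : ∀ (m m' : M) (n : N), a m' n • m = a m n • α m' := by
    intro m m' n
    let θ : TensorProduct R M N →ₗ[R] M := TensorProduct.lift
      (LinearMap.mk₂ R (fun x y => a m' y • x)
        (fun x x' y => smul_add _ _ _)
        (fun c x y => smul_comm _ _ _)
        (fun x y y' => by
          show a m' (y + y') • x = a m' y • x + a m' y' • x
          rw [map_add, add_smul])
        (fun c x y => by
          show a m' (c • y) • x = c • (a m' y • x)
          rw [map_smul, smul_eq_mul, mul_smul]))
    have h1 : θ (m ⊗ₜ[R] n) = a m' n • m := rfl
    have h2 : θ (inv.symm 1) = α m' := by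
      rw [hS, map_sum]
      exact Finset.sum_congr rfl fun q _ => rfl
    rw [← h1, K1 m n, map_smul, h2]
  have D2 : ∀ (m : M) (n : N), a m n • (α m - m) = 0 := by
    intro m n
    rw [smul_sub, sub_eq_zero]
    exact (I1 m m n).symm
  have E2 : ∀ (m m' : M) (n : N), a m' n • (α m - m) = -(a m n • (α m' - m')) := by
    intro m m' n
    have h1 : a m' n • α m = a m n • m' := (I1 m' m n).symm
    have h2 : a m' n • m = a m n • α m' := I1 m m' n
    rw [smul_sub, smul_sub, h1, h2, neg_sub]
  have hB : ∀ m : M, α m = m := by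
    intro m
    rw [← sub_eq_zero]
    have h1 : α m - m = ∑ q ∈ S, (a q.1 q.2) ^ p • (α m - m) := by
      rw [← Finset.sum_smul, ← sum_pow_char, sum1, one_pow, one_smul]
    rw [h1]
    refine Finset.sum_eq_zero fun q _ => ?_
    have h2 : (a q.1 q.2) ^ p = (a q.1 q.2) ^ (p - 2) * (a q.1 q.2 * a q.1 q.2) := by
      rw [← pow_two, ← pow_add, Nat.sub_add_cancel hp.two_le]
    rw [h2, mul_smul, mul_smul, E2 m q.1 q.2, smul_neg, smul_comm, D2]
    simp
  have hA : ∀ (m m' : M) (n : N), a m' n • m = a m n • m' := by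
    intro m m' n
    rw [I1 m m' n, hB]
  -- abbreviation for the tensor power and bridge lemmas for its scalar action
  have hsadd : ∀ (x : R) (t t' : PiTensorProduct R (fun _ : Fin p => M)),
      x • (t + t') = x • t + x • t' := fun x t t' => smul_add x t t'
  have hszero : ∀ x : R, x • (0 : PiTensorProduct R (fun _ : Fin p => M)) = 0 :=
    fun x => smul_zero x
  have hs0 : ∀ t : PiTensorProduct R (fun _ : Fin p => M), (0 : R) • t = 0 :=
    fun t => zero_smul R t
  have hsaddl : ∀ (x y : R) (t : PiTensorProduct R (fun _ : Fin p => M)),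
      (x + y) • t = x • t + y • t := fun x y t => add_smul x y t
  have hsmul : ∀ (x y : R) (t : PiTensorProduct R (fun _ : Fin p => M)),
      (x * y) • t = x • (y • t) := fun x y t => mul_smul x y t
  have hscomm : ∀ (x y : R) (t : PiTensorProduct R (fun _ : Fin p => M)),
      x • (y • t) = y • (x • t) := fun x y t => smul_comm x y t
  have hsum : ∀ (x : R) (g : M × N → PiTensorProduct R (fun _ : Fin p => M)),
      ∑ q ∈ S, x • g q = x • ∑ q ∈ S, g q := fun x g => (Finset.smul_sum).symm
  -- evaluation of an arbitrary pure tensor in the p-fold tensor power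
  have hT : ∀ f : Fin p → M,
      PiTensorProduct.tprod R f
        = ∑ q ∈ S, (∏ k : Fin p, a (f k) q.2) •
            PiTensorProduct.tprod R (fun _ : Fin p => q.1) := by
    intro f
    have h0 : PiTensorProduct.tprod R f
        = ∑ q ∈ S, (a q.1 q.2) ^ p • PiTensorProduct.tprod R f := by
      rw [← Finset.sum_smul, ← sum_pow_char, sum1, one_pow, one_smul]
    conv_lhs => rw [h0]
    refine Finset.sum_congr rfl fun q _ => ?_
    have h1 : (a q.1 q.2) ^ p • PiTensorProduct.tprod R f
        = PiTensorProduct.tprod R (fun k => a q.1 q.2 • f k) := by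
      rw [MultilinearMap.map_smul_univ, Finset.prod_const, Finset.card_univ, Fintype.card_fin]
    rw [h1]
    have h2 : (fun k : Fin p => a q.1 q.2 • f k) = fun k => a (f k) q.2 • q.1 :=
      funext fun k => hA (f k) q.1 q.2
    rw [h2, MultilinearMap.map_smul_univ]
  have hδadd : ∀ m m' : M,
      PiTensorProduct.tprod R (fun _ : Fin p => m + m')
        = PiTensorProduct.tprod R (fun _ : Fin p => m)
          + PiTensorProduct.tprod R (fun _ : Fin p => m') := by
    intro m m'
    rw [hT (fun _ => m + m'), hT (fun _ => m), hT (fun _ => m'), ← Finset.sum_add_distrib]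
    refine Finset.sum_congr rfl fun q _ => ?_
    rw [Finset.prod_const, Finset.prod_const, Finset.prod_const, Finset.card_univ,
      Fintype.card_fin]
    have h3 : a (m + m') q.2 = a m q.2 + a m' q.2 := by rw [map_add]; rfl
    rw [h3, add_pow_char, add_smul]
  have hδsmul : ∀ (r : R) (m : M),
      PiTensorProduct.tprod R (fun _ : Fin p => r • m)
        = r ^ p • PiTensorProduct.tprod R (fun _ : Fin p => m) := by
    intro r m
    rw [MultilinearMap.map_smul_univ, Finset.prod_const, Finset.card_univ, Fintype.card_fin]
  have hδzero : PiTensorProduct.tprod R (fun _ : Fin p => (0 : M)) = 0 :=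
    MultilinearMap.map_coord_zero _ (⟨0, hp.pos⟩ : Fin p) rfl
  -- the linear functionals on the tensor power
  let L : M × N → PiTensorProduct R (fun _ : Fin p => M) →ₗ[R] R := fun q =>
    PiTensorProduct.lift
      ((MultilinearMap.mkPiAlgebra R (Fin p) R).compLinearMap (fun _ => a.flip q.2))
  have hL : ∀ (q : M × N) (f : Fin p → M),
      L q (PiTensorProduct.tprod R f) = ∏ k : Fin p, a (f k) q.2 := by
    intro q f
    simp [L, PiTensorProduct.lift.tprod]
  have hLsmul : ∀ (q : M × N) (x : R) (t : PiTensorProduct R (fun _ : Fin p => M)),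
      L q (x • t) = x * L q t := by
    intro q x t
    rw [map_smul, smul_eq_mul]
  -- now change the module structure on the left factor
  letI : Module R R := Module.compHom R (frobenius R p)
  have balance : ∀ (c x : R) (m : M), (c ^ p * x) ⊗ₜ[R] m = x ⊗ₜ[R] (c • m) := by
    intro c x m
    have h : ((frobenius R p c * x) ⊗ₜ[R] m : TensorProduct R R M) = x ⊗ₜ[R] (c • m) :=
      Quotient.sound' <| AddConGen.Rel.of _ _ <| TensorProduct.Eqv.of_smul c x m
    rwa [frobenius_def] at h
  -- the forward map
  let Gf : R →+ M →+ PiTensorProduct R (fun _ : Fin p => M) :=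
    { toFun := fun x =>
        { toFun := fun m => x • PiTensorProduct.tprod R (fun _ : Fin p => m)
          map_zero' := by
            show x • PiTensorProduct.tprod R (fun _ : Fin p => (0 : M)) = 0
            rw [hδzero, hszero]
          map_add' := fun m m' => by
            show x • PiTensorProduct.tprod R (fun _ : Fin p => m + m')
              = x • PiTensorProduct.tprod R (fun _ : Fin p => m)
                + x • PiTensorProduct.tprod R (fun _ : Fin p => m')
            rw [hδadd, hsadd] }
      map_zero' := by
        ext m
        show (0 : R) • PiTensorProduct.tprod R (fun _ : Fin p => m) = 0
        rw [hs0]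
      map_add' := fun x y => by
        ext m
        show (x + y) • PiTensorProduct.tprod R (fun _ : Fin p => m)
          = x • PiTensorProduct.tprod R (fun _ : Fin p => m)
            + y • PiTensorProduct.tprod R (fun _ : Fin p => m)
        rw [hsaddl] }
  let G : TensorProduct R R M →+ PiTensorProduct R (fun _ : Fin p => M) :=
    TensorProduct.liftAddHom Gf (fun r x m => by
      show (frobenius R p r * x) • PiTensorProduct.tprod R (fun _ : Fin p => m)
        = x • PiTensorProduct.tprod R (fun _ : Fin p => r • m)
      rw [frobenius_def, hδsmul, hsmul, hscomm])
  have hG : ∀ (x : R) (m : M),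
      G (x ⊗ₜ[R] m) = x • PiTensorProduct.tprod R (fun _ : Fin p => m) := fun x m => rfl
  -- the inverse map
  let F : PiTensorProduct R (fun _ : Fin p => M) → TensorProduct R R M := fun t =>
    ∑ q ∈ S, (L q t) ⊗ₜ[R] q.1
  have hFadd : ∀ u v, F (u + v) = F u + F v := by
    intro u v
    show ∑ q ∈ S, (L q (u + v)) ⊗ₜ[R] q.1
      = ∑ q ∈ S, (L q u) ⊗ₜ[R] q.1 + ∑ q ∈ S, (L q v) ⊗ₜ[R] q.1
    rw [← Finset.sum_add_distrib]
    exact Finset.sum_congr rfl fun q _ => by rw [map_add, TensorProduct.add_tmul]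
  have hLeft : ∀ z : TensorProduct R R M, F (G z) = z := by
    intro z
    induction z using TensorProduct.induction_on with
    | zero =>
      rw [map_zero]
      show ∑ q ∈ S, (L q 0) ⊗ₜ[R] q.1 = 0
      simp [TensorProduct.zero_tmul]
    | tmul x m =>
      rw [hG]
      show ∑ q ∈ S, (L q (x • PiTensorProduct.tprod R (fun _ : Fin p => m))) ⊗ₜ[R] q.1
        = x ⊗ₜ[R] m
      have hq : ∀ q ∈ S, (L q (x • PiTensorProduct.tprod R (fun _ : Fin p => m))) ⊗ₜ[R] q.1
          = x ⊗ₜ[R] (a m q.2 • q.1) := by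
        intro q _
        rw [hLsmul, hL, Finset.prod_const, Finset.card_univ, Fintype.card_fin,
          mul_comm, balance]
      rw [Finset.sum_congr rfl hq, ← TensorProduct.tmul_sum]
      show x ⊗ₜ[R] (α m) = x ⊗ₜ[R] m
      rw [hB]
    | add u v hu hv => rw [map_add, hFadd, hu, hv]
  have hRight : ∀ t : PiTensorProduct R (fun _ : Fin p => M), G (F t) = t := by
    intro t
    induction t using PiTensorProduct.induction_on with
    | smul_tprod r f =>
      show G (∑ q ∈ S, (L q (r • PiTensorProduct.tprod R f)) ⊗ₜ[R] q.1) = _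
      rw [map_sum]
      have hq : ∀ q ∈ S, G ((L q (r • PiTensorProduct.tprod R f)) ⊗ₜ[R] q.1)
          = r • ((∏ k : Fin p, a (f k) q.2) •
              PiTensorProduct.tprod R (fun _ : Fin p => q.1)) := by
        intro q _
        rw [hLsmul, hL, hG, hsmul]
      rw [Finset.sum_congr rfl hq, hsum, ← hT]
    | add u v hu hv => rw [hFadd, map_add, hu, hv]
  refine ⟨⟨⟨G, F, hLeft, hRight⟩, map_add G⟩, ?_⟩
  intro r x m
  show G ((r * x) ⊗ₜ[R] m) = r • G (x ⊗ₜ[R] m)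
  rw [hG, hG, hsmul]
end
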